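/- arXiv:1503.08625 — 2 statements merged into one kernel-verified Lean document; each statement's English description precedes it below -/
import Mathlib

section
/- Let V be an isometry on a complex Hilbert space G and let g ∈ G. Let M_g denote the closed linear span of {Vⁿ g : n ≥ 0}, and let N_g = M_g ∩ (V M_g)^⊥ (the wandering subspace of the restriction of V to M_g; note V M_g is closed since V is an isometry). If g₀ denotes the orthogonal projection of g onto N_g, then N_g equals the closed linear span of {g₀}, i.e. N_g = ℂ·g₀. -/
/-!
An element `h ∈ N_g` orthogonal to `g₀` is orthogonal to `g`, because `g - g₀ ⊥ N_g`, and to every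
`V^(n+1) g ∈ V M_g`, because `h ⊥ V M_g`. So `h` is orthogonal to a spanning set of `M_g ∋ h`, and
`h = 0`. Thus `N_g ⊓ (ℂ g₀)ᗮ = 0`, which forces `N_g = ℂ g₀` since `g₀ ∈ N_g`.
-/

open scoped InnerProductSpace

section

variable {𝕜 E : Type*} [RCLike 𝕜] [NormedAddCommGroup E] [InnerProductSpace 𝕜 E]

namespace Submodule

theorem eq_span_singleton_of_orthogonal_inf_eq_bot {N : Submodule 𝕜 E} {v : E} (hv : v ∈ N)
    (h : (𝕜 ∙ v)ᗮ ⊓ N = ⊥) : N = 𝕜 ∙ v := by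
  have hsup := sup_orthogonal_inf_of_hasOrthogonalProjection ((span_singleton_le_iff_mem v N).2 hv)
  rwa [h, sup_bot_eq, eq_comm] at hsup

theorem eq_zero_of_mem_topologicalClosure_span {s : Set E} {h : E}
    (hh : h ∈ (span 𝕜 s).topologicalClosure) (hs : ∀ x ∈ s, ⟪x, h⟫_𝕜 = 0) : h = 0 := by
  have hle : (span 𝕜 s).topologicalClosure ≤ (𝕜 ∙ h)ᗮ := by
    refine topologicalClosure_minimal _ ?_ (isClosed_orthogonal _)
    rw [span_le]
    exact fun x hx ↦ mem_orthogonal_singleton_iff_inner_left.2 (hs x hx)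
  exact inner_self_eq_zero.1 (mem_orthogonal_singleton_iff_inner_right.1 (hle hh))

end Submodule

open Submodule

theorem eq_zero_of_mem_wandering_cyclic_of_inner_eq_zero (T : E →L[𝕜] E) {g h : E}
    (hh : h ∈ (span 𝕜 (Set.range fun n : ℕ => (T ^ n) g)).topologicalClosure ⊓
      ((span 𝕜 (Set.range fun n : ℕ => (T ^ n) g)).topologicalClosure.map (T : E →ₗ[𝕜] E))ᗮ)
    (hg : ⟪g, h⟫_𝕜 = 0) : h = 0 := by
  set M := (span 𝕜 (Set.range fun n : ℕ => (T ^ n) g)).topologicalClosure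
  have hmem (n : ℕ) : (T ^ n) g ∈ M := le_topologicalClosure _ (subset_span ⟨n, rfl⟩)
  refine eq_zero_of_mem_topologicalClosure_span hh.1 ?_
  rintro _ ⟨_ | n, rfl⟩
  · exact hg
  · have hmap : (T ^ (n + 1)) g ∈ M.map (T : E →ₗ[𝕜] E) := by
      rw [pow_succ']
      exact mem_map_of_mem (hmem n)
    exact inner_right_of_mem_orthogonal hmap hh.2

end

theorem wandering_subspace_of_cyclic_subspace_eq_span_proj_general
    {G : Type*} [NormedAddCommGroup G] [InnerProductSpace ℂ G]
    (V : G →L[ℂ] G)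
    (g : G)
    (Mg : Submodule ℂ G)
    (hMg : Mg = (Submodule.span ℂ (Set.range fun n : ℕ => (V ^ n) g)).topologicalClosure)
    (Ng : Submodule ℂ G)
    (hNg : Ng = Mg ⊓ (Mg.map (V : G →ₗ[ℂ] G))ᗮ)
    (g₀ : G) (hg₀mem : g₀ ∈ Ng) (hg₀proj : g - g₀ ∈ Ngᗮ) :
    Ng = Submodule.span ℂ {g₀} := by
  refine Submodule.eq_span_singleton_of_orthogonal_inf_eq_bot hg₀mem (eq_bot_iff.2 ?_)
  rintro h ⟨hperp, hN⟩
  have hg₀h : ⟪g₀, h⟫_ℂ = 0 := Submodule.mem_orthogonal_singleton_iff_inner_right.1 hperp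
  have hgh : ⟪g, h⟫_ℂ = 0 := by
    rw [← sub_add_cancel g g₀, inner_add_left, hg₀h,
      Submodule.inner_left_of_mem_orthogonal hN hg₀proj, add_zero]
  subst hMg hNg
  exact eq_zero_of_mem_wandering_cyclic_of_inner_eq_zero V hN hgh

/-- for an isometry `V` on a Hilbert space `G` and `g ∈ G`, the wandering
subspace `N_g = M_g ∩ (V M_g)ᗮ` of the cyclic subspace `M_g = closed span {Vⁿ g : n ≥ 0}`
is the one-dimensional space `ℂ·g₀`, where `g₀` is the orthogonal projection of `g`
onto `N_g`. -/
theorem wandering_subspace_of_cyclic_subspace_eq_span_proj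
    {G : Type*} [NormedAddCommGroup G] [InnerProductSpace ℂ G] [CompleteSpace G]
    (V : G →L[ℂ] G) (hV : ∀ x y : G, ⟪V x, V y⟫_ℂ = ⟪x, y⟫_ℂ)
    (g : G)
    (Mg : Submodule ℂ G)
    (hMg : Mg = (Submodule.span ℂ (Set.range fun n : ℕ => (V ^ n) g)).topologicalClosure)
    (Ng : Submodule ℂ G)
    (hNg : Ng = Mg ⊓ (Mg.map (V : G →ₗ[ℂ] G))ᗮ)
    (g₀ : G) (hg₀mem : g₀ ∈ Ng) (hg₀proj : g - g₀ ∈ Ngᗮ) :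
    Ng = Submodule.span ℂ {g₀} :=
  wandering_subspace_of_cyclic_subspace_eq_span_proj_general V g Mg hMg Ng hNg g₀ hg₀mem hg₀proj
end

section
/- Let H be a complex Hilbert space, S_H the unilateral shift on ℓ²(ℕ,H), and S the unilateral shift on ℓ²(ℕ) = ℓ²(ℕ,ℂ). For every nonzero g ∈ ℓ²(ℕ,H) there exists an isometry W : ℓ²(ℕ) → ℓ²(ℕ,H) satisfying W ∘ S = S_H ∘ W whose range equals M_g, the closed linear span of {S_Hⁿ g : n ≥ 0}, and such that the vector y := W* g is outer, i.e. the closed linear span of {Sⁿ y : n ≥ 0} is all of ℓ²(ℕ). In particular g = W y. -/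
noncomputable section

open scoped ENNReal InnerProductSpace

set_option linter.unusedSectionVars false

namespace Shift

variable (H : Type*) [NormedAddCommGroup H] [InnerProductSpace ℂ H]

/-- The underlying function of the unilateral shift: `(shiftFun x) 0 = 0`,
`(shiftFun x) (n+1) = x n`. -/
def shiftFun (x : ℕ → H) : ℕ → H
  | 0 => 0
  | n + 1 => x n

variable {H}

theorem memℓp_shiftFun {x : ℕ → H} (hx : Memℓp x 2) : Memℓp (shiftFun H x) 2 := by
  apply memℓp_gen
  have h2 : (0:ℝ) < (2 : ℝ≥0∞).toReal := by norm_num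
  have hs : Summable fun n : ℕ => ‖x n‖ ^ (2 : ℝ≥0∞).toReal := (memℓp_gen_iff h2).1 hx
  exact (summable_nat_add_iff 1).1 (by simpa [shiftFun] using hs)

theorem tsum_shiftFun (x : ℕ → H) (hx : Memℓp x 2) :
    (∑' n, ‖shiftFun H x n‖ ^ (2 : ℝ≥0∞).toReal) = ∑' n, ‖x n‖ ^ (2 : ℝ≥0∞).toReal := by
  have h2 : (0:ℝ) < (2 : ℝ≥0∞).toReal := by norm_num
  rw [Summable.tsum_eq_zero_add (memℓp_gen_iff h2 |>.1 (memℓp_shiftFun hx))]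
  simp [shiftFun]

variable (H)

/-- The unilateral shift as a linear isometry on `ℓ²(ℕ, H)`. -/
def shiftLi : lp (fun _ : ℕ => H) 2 →ₗᵢ[ℂ] lp (fun _ : ℕ => H) 2 where
  toFun x := ⟨shiftFun H x, memℓp_shiftFun (lp.memℓp x)⟩
  map_add' x y := by
    apply lp.ext
    funext n
    cases n <;> simp [shiftFun, lp.coeFn_add] <;> first | exact (add_zero 0).symm | rfl
  map_smul' c x := by
    apply lp.ext
    funext n
    cases n <;> simp [shiftFun, lp.coeFn_smul]
  norm_map' x := by
    have h2 : (0:ℝ) < (2 : ℝ≥0∞).toReal := by norm_num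
    rw [lp.norm_eq_tsum_rpow h2, lp.norm_eq_tsum_rpow h2]
    congr 1
    exact tsum_shiftFun x (lp.memℓp x)

/-- The unilateral shift `S_H` on `ℓ²(ℕ, H)`, as a continuous linear map:
`(shift H x) 0 = 0` and `(shift H x) (n+1) = x n`. -/
def shift : lp (fun _ : ℕ => H) 2 →L[ℂ] lp (fun _ : ℕ => H) 2 :=
  (shiftLi H).toContinuousLinearMap

variable {H}

end Shift

/-!
The shift is a pure isometry: the ranges of its powers meet only in `0`. For such an isometry `T`
and `g ≠ 0` this forces `g ∉ M_{Tg} = T M_g`, so the normalized component `w` of `g` orthogonal to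
`T M_g` is a unit vector with `M_g = ℂ w ⊕ T M_g`. Then the vectors `Tⁿ w` are orthonormal and their
closed span is `M_g`, and `W : eₙ ↦ Tⁿ w` is an isometry intertwining the shifts with range `M_g`.
Since `W` maps `M_{W* g}` onto `M_{W W* g} = M_g = range W` and is injective, `W* g` is outer.
-/

section CyclicSubspace

variable {𝕜 E F : Type*} [NontriviallyNormedField 𝕜]
  [NormedAddCommGroup E] [NormedSpace 𝕜 E] [NormedAddCommGroup F] [NormedSpace 𝕜 F]

/-- The closed linear span `M_x` of the orbit `x, T x, T² x, …`. -/
def cyclicSubspace (T : E →L[𝕜] E) (x : E) : Submodule 𝕜 E :=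
  (Submodule.span 𝕜 (Set.range fun n : ℕ => (T ^ n) x)).topologicalClosure

variable {T : E →L[𝕜] E} {x y : E}

instance [CompleteSpace E] : CompleteSpace (cyclicSubspace T x) :=
  Submodule.topologicalClosure.completeSpace _

theorem pow_apply_mem_cyclicSubspace (n : ℕ) : (T ^ n) x ∈ cyclicSubspace T x :=
  Submodule.le_topologicalClosure _ (Submodule.subset_span ⟨n, rfl⟩)

theorem mem_cyclicSubspace_self : x ∈ cyclicSubspace T x :=
  pow_apply_mem_cyclicSubspace 0

theorem cyclicSubspace_le {K : Submodule 𝕜 E} (hK : IsClosed (K : Set E))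
    (h : ∀ n : ℕ, (T ^ n) x ∈ K) : cyclicSubspace T x ≤ K :=
  Submodule.topologicalClosure_minimal _ (Submodule.span_le.2 (Set.range_subset_iff.2 h)) hK

theorem cyclicSubspace_apply_le : cyclicSubspace T (T x) ≤ cyclicSubspace T x :=
  cyclicSubspace_le (Submodule.isClosed_topologicalClosure _) fun n => by
    simpa [pow_succ, mul_apply_eq_comp] using pow_apply_mem_cyclicSubspace (T := T) (x := x) (n + 1)

theorem apply_mem_cyclicSubspace_apply (hy : y ∈ cyclicSubspace T x) :
    T y ∈ cyclicSubspace T (T x) := by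
  have hmaps : cyclicSubspace T x ≤ (cyclicSubspace T (T x)).comap (T : E →ₗ[𝕜] E) := by
    refine cyclicSubspace_le ((Submodule.isClosed_topologicalClosure _).preimage T.continuous)
      fun n => ?_
    change T ((T ^ n) x) ∈ cyclicSubspace T (T x)
    rw [← mul_apply_eq_comp, ← pow_succ', pow_succ, mul_apply_eq_comp]
    exact pow_apply_mem_cyclicSubspace n
  exact hmaps hy

theorem apply_mem_cyclicSubspace (hy : y ∈ cyclicSubspace T x) : T y ∈ cyclicSubspace T x :=
  cyclicSubspace_apply_le (apply_mem_cyclicSubspace_apply hy)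

theorem cyclicSubspace_le_of_mem (hy : y ∈ cyclicSubspace T x) :
    cyclicSubspace T y ≤ cyclicSubspace T x := by
  refine cyclicSubspace_le (Submodule.isClosed_topologicalClosure _) fun n => ?_
  induction n with
  | zero => simpa using hy
  | succ n ih => simpa [pow_succ', mul_apply_eq_comp] using apply_mem_cyclicSubspace ih

theorem Isometry.image_cyclicSubspace [CompleteSpace E] {T' : F →L[𝕜] F} {W : E →L[𝕜] F}
    (hW : Isometry W) (hWT : W.comp T = T'.comp W) (x : E) :
    W '' cyclicSubspace T x = cyclicSubspace T' (W x) := by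
  have hpow : ∀ n : ℕ, W ((T ^ n) x) = (T' ^ n) (W x) := by
    intro n
    induction n with
    | zero => simp
    | succ n ih =>
      simp only [pow_succ', mul_apply_eq_comp, ← ih]
      exact congrArg (· ((T ^ n) x)) (congrArg DFunLike.coe hWT)
  rw [cyclicSubspace, cyclicSubspace, Submodule.topologicalClosure_coe,
    Submodule.topologicalClosure_coe, ← hW.isClosedEmbedding.closure_image_eq]
  congr 1
  rw [← ContinuousLinearMap.coe_coe, ← Submodule.map_coe, ← Submodule.span_image,
    ← Set.range_comp]
  simp only [Function.comp_def, ContinuousLinearMap.coe_coe, hpow]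

theorem ContinuousLinearMap.isometry_pow (hT : Isometry T) (n : ℕ) : Isometry (T ^ n) := by
  induction n with
  | zero => simpa using isometry_id
  | succ n ih => simpa [pow_succ', FunLike.coe_mul_eq_comp] using hT.comp ih

theorem eq_zero_of_subset_image (hpure : ∀ x, (∀ n : ℕ, x ∈ Set.range (T ^ n)) → x = 0)
    {A : Set E} (hA : A ⊆ T '' A) {x : E} (hx : x ∈ A) : x = 0 := by
  refine hpure x fun n => ?_
  have hAn : A ⊆ (T ^ n) '' A := by
    induction n with
    | zero => simp
    | succ n ih =>
      rw [pow_succ', FunLike.coe_mul_eq_comp, Set.image_comp]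
      exact hA.trans (Set.image_mono ih)
  exact Set.image_subset_range _ _ (hAn hx)

end CyclicSubspace

section PureIsometry

variable {𝕜 E F : Type*} [RCLike 𝕜]
  [NormedAddCommGroup E] [InnerProductSpace 𝕜 E] [NormedAddCommGroup F] [InnerProductSpace 𝕜 F]
  {T : E →L[𝕜] E}

open scoped InnerProductSpace

theorem ContinuousLinearMap.inner_map_map_of_isometry {W : E →L[𝕜] F} (hW : Isometry W)
    (x y : E) : ⟪W x, W y⟫_𝕜 = ⟪x, y⟫_𝕜 :=
  (LinearMap.norm_map_iff_inner_map_map W).1 ((AddMonoidHomClass.isometry_iff_norm W).1 hW) x y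

theorem orthonormal_pow_apply (hT : Isometry T) {w : E} (hw : ‖w‖ = 1)
    (horth : ∀ n : ℕ, ⟪w, (T ^ (n + 1)) w⟫_𝕜 = 0) : Orthonormal 𝕜 fun n : ℕ => (T ^ n) w := by
  refine ⟨fun n => ((AddMonoidHomClass.isometry_iff_norm _).1 (T.isometry_pow hT n) w).trans hw,
    fun m n hmn => ?_⟩
  wlog hlt : m < n generalizing m n
  · rw [inner_eq_zero_symm]
    exact this n m hmn.symm (by omega)
  obtain ⟨k, rfl⟩ := Nat.exists_eq_add_of_lt hlt
  dsimp only
  rw [add_assoc, pow_add, mul_apply_eq_comp,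
    ContinuousLinearMap.inner_map_map_of_isometry (T.isometry_pow hT m)]
  exact horth k

variable [CompleteSpace E]

/-- Every `x` with `x ∈ M_{T x}` is `T y` for some `y ∈ M_{T y}`, so such an `x` lies in the
range of every power of `T`. -/
theorem notMem_cyclicSubspace_apply (hT : Isometry T)
    (hpure : ∀ x, (∀ n : ℕ, x ∈ Set.range (T ^ n)) → x = 0) {g : E} (hg : g ≠ 0) :
    g ∉ cyclicSubspace T (T g) := by
  refine fun hmem => hg (eq_zero_of_subset_image hpure (A := {x | x ∈ cyclicSubspace T (T x)})
    (fun x hx => ?_) hmem)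
  obtain ⟨y, hy, rfl⟩ : x ∈ T '' cyclicSubspace T x := by
    rwa [hT.image_cyclicSubspace rfl]
  exact ⟨y, hy, rfl⟩

/-- A unit vector spanning `M_g ⊖ M_{T g}` when `g ∉ M_{T g}`, and `0` otherwise. -/
def wanderingVector (T : E →L[𝕜] E) (g : E) : E :=
  (‖g - (cyclicSubspace T (T g)).starProjection g‖⁻¹ : 𝕜) •
    (g - (cyclicSubspace T (T g)).starProjection g)

variable {g : E}

theorem wanderingVector_mem_orthogonal : wanderingVector T g ∈ (cyclicSubspace T (T g))ᗮ :=
  Submodule.smul_mem _ _ (Submodule.sub_starProjection_mem_orthogonal g)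

theorem wanderingVector_mem_cyclicSubspace : wanderingVector T g ∈ cyclicSubspace T g :=
  Submodule.smul_mem _ _ (Submodule.sub_mem _ mem_cyclicSubspace_self
    (cyclicSubspace_apply_le (Submodule.starProjection_apply_mem _ g)))

theorem norm_wanderingVector (hT : Isometry T)
    (hpure : ∀ x, (∀ n : ℕ, x ∈ Set.range (T ^ n)) → x = 0) (hg : g ≠ 0) :
    ‖wanderingVector T g‖ = 1 := by
  have hne : g - (cyclicSubspace T (T g)).starProjection g ≠ 0 := by
    intro h
    have hP := (cyclicSubspace T (T g)).starProjection_apply_mem g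
    rw [← sub_eq_zero.1 h] at hP
    exact notMem_cyclicSubspace_apply hT hpure hg hP
  exact norm_smul_inv_norm hne

theorem cyclicSubspace_le_sup_span_wanderingVector :
    cyclicSubspace T g ≤ cyclicSubspace T (T g) ⊔ 𝕜 ∙ wanderingVector T g := by
  set N := cyclicSubspace T (T g)
  have hgw : g - N.starProjection g ∈ 𝕜 ∙ wanderingVector T g := by
    refine Submodule.mem_span_singleton.2 ⟨‖g - N.starProjection g‖, ?_⟩
    rcases eq_or_ne (g - N.starProjection g) 0 with h | h
    · simp [wanderingVector, N, h]
    · simp only [wanderingVector]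
      rw [smul_smul, mul_inv_cancel₀ (by simpa using h), one_smul]
  refine cyclicSubspace_le (N.isClosed_sup_finiteDimensional _
    (Submodule.isClosed_topologicalClosure _)) fun n => ?_
  cases n with
  | zero =>
    simpa using Submodule.add_mem _ (Submodule.mem_sup_right hgw)
      (Submodule.mem_sup_left (N.starProjection_apply_mem g))
  | succ n =>
    rw [pow_succ, mul_apply_eq_comp]
    exact Submodule.mem_sup_left (pow_apply_mem_cyclicSubspace n)

theorem mem_cyclicSubspace_apply_of_inner_wanderingVector_eq_zero {u : E}
    (hu : u ∈ cyclicSubspace T g) (huw : ⟪wanderingVector T g, u⟫_𝕜 = 0) :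
    u ∈ cyclicSubspace T (T g) := by
  obtain ⟨v, hv, _, hcw, rfl⟩ := Submodule.mem_sup.1 (cyclicSubspace_le_sup_span_wanderingVector hu)
  obtain ⟨c, rfl⟩ := Submodule.mem_span_singleton.1 hcw
  have hvw : ⟪wanderingVector T g, v⟫_𝕜 = 0 :=
    Submodule.inner_left_of_mem_orthogonal hv wanderingVector_mem_orthogonal
  rw [inner_add_right, hvw, zero_add, inner_smul_right, mul_eq_zero, inner_self_eq_zero] at huw
  rcases huw with rfl | hw0
  · simpa using hv
  · simpa [hw0] using hv

/-- The part of `M_g` orthogonal to `M_w` is orthogonal to `w`, hence lies in `M_{T g} = T M_g`,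
and its preimage under `T` is again orthogonal to `M_w` because `T M_w ⊆ M_w`. -/
theorem cyclicSubspace_wanderingVector (hT : Isometry T)
    (hpure : ∀ x, (∀ n : ℕ, x ∈ Set.range (T ^ n)) → x = 0) (g : E) :
    cyclicSubspace T (wanderingVector T g) = cyclicSubspace T g := by
  set K := cyclicSubspace T (wanderingVector T g)
  have hKg : K ≤ cyclicSubspace T g := cyclicSubspace_le_of_mem wanderingVector_mem_cyclicSubspace
  have hA : ((cyclicSubspace T g ⊓ Kᗮ : Submodule 𝕜 E) : Set E) ⊆
      T '' (cyclicSubspace T g ⊓ Kᗮ : Submodule 𝕜 E) := by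
    rintro r ⟨hrg, hrK⟩
    have hrTg : r ∈ cyclicSubspace T (T g) :=
      mem_cyclicSubspace_apply_of_inner_wanderingVector_eq_zero hrg
        (Submodule.inner_right_of_mem_orthogonal mem_cyclicSubspace_self hrK)
    obtain ⟨u, hug, rfl⟩ : r ∈ T '' cyclicSubspace T g := by
      rwa [hT.image_cyclicSubspace rfl]
    refine ⟨u, ⟨hug, fun y hy => ?_⟩, rfl⟩
    rw [← ContinuousLinearMap.inner_map_map_of_isometry hT]
    exact Submodule.inner_right_of_mem_orthogonal (apply_mem_cyclicSubspace hy) hrK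
  refine le_antisymm hKg fun x hx => ?_
  have hr := eq_zero_of_subset_image hpure hA
    (Submodule.mem_inf.2 ⟨Submodule.sub_mem _ hx (hKg (K.starProjection_apply_mem x)),
      K.sub_starProjection_mem_orthogonal x⟩)
  rw [sub_eq_zero] at hr
  exact hr ▸ K.starProjection_apply_mem x

theorem orthonormal_pow_apply_wanderingVector (hT : Isometry T)
    (hpure : ∀ x, (∀ n : ℕ, x ∈ Set.range (T ^ n)) → x = 0) {g : E} (hg : g ≠ 0) :
    Orthonormal 𝕜 fun n : ℕ => (T ^ n) (wanderingVector T g) := by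
  refine orthonormal_pow_apply hT (norm_wanderingVector hT hpure hg) fun n => ?_
  have hTw := apply_mem_cyclicSubspace_apply (wanderingVector_mem_cyclicSubspace (T := T) (g := g))
  refine Submodule.inner_left_of_mem_orthogonal (cyclicSubspace_le_of_mem hTw ?_)
    wanderingVector_mem_orthogonal
  rw [pow_succ, mul_apply_eq_comp]
  exact pow_apply_mem_cyclicSubspace n

end PureIsometry

section InnerOuter

variable {𝕜 E F : Type*} [RCLike 𝕜]
  [NormedAddCommGroup E] [InnerProductSpace 𝕜 E] [CompleteSpace E]
  [NormedAddCommGroup F] [InnerProductSpace 𝕜 F] [CompleteSpace F]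
  {W : E →L[𝕜] F}

theorem Orthonormal.range_linearIsometry {ι : Type*} {v : ι → F} (hv : Orthonormal 𝕜 v) :
    LinearMap.range hv.orthogonalFamily.linearIsometry.toLinearMap =
      (Submodule.span 𝕜 (Set.range v)).topologicalClosure := by
  rw [hv.orthogonalFamily.range_linearIsometry, Submodule.span_range_eq_iSup]
  simp only [LinearMap.span_singleton_eq_range]
  rfl

theorem Isometry.apply_adjoint_apply_of_mem_range (hW : Isometry W) {g : F}
    (hg : g ∈ LinearMap.range W.toLinearMap) : W (ContinuousLinearMap.adjoint W g) = g := by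
  obtain ⟨z, rfl⟩ := hg
  have hWW := W.isometry_iff_adjoint_comp_self.1 hW
  change W ((ContinuousLinearMap.adjoint W ∘L W) z) = W z
  rw [hWW, one_apply_eq_self]

theorem Isometry.cyclicSubspace_adjoint_apply_eq_top (hW : Isometry W) {S : E →L[𝕜] E}
    {T : F →L[𝕜] F} (hWS : W.comp S = T.comp W) {g : F}
    (hrange : LinearMap.range W.toLinearMap = cyclicSubspace T g) :
    cyclicSubspace S (ContinuousLinearMap.adjoint W g) = ⊤ := by
  have hWg := hW.apply_adjoint_apply_of_mem_range (hrange ▸ mem_cyclicSubspace_self)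
  refine Submodule.eq_top_iff'.2 fun x => ?_
  obtain ⟨y, hy, hyx⟩ : W x ∈ W '' cyclicSubspace S (ContinuousLinearMap.adjoint W g) := by
    rw [hW.image_cyclicSubspace hWS, hWg, ← hrange]
    exact LinearMap.mem_range_self _ x
  exact hW.injective hyx ▸ hy

end InnerOuter

namespace Shift

variable {H : Type*} [NormedAddCommGroup H] [InnerProductSpace ℂ H]

@[simp]
theorem shift_apply_zero (x : lp (fun _ : ℕ => H) 2) : (shift H x) 0 = 0 := rfl

@[simp]
theorem shift_apply_succ (x : lp (fun _ : ℕ => H) 2) (n : ℕ) : (shift H x) (n + 1) = x n := rfl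

theorem isometry_shift : Isometry (shift H) := (shiftLi H).isometry

theorem shift_pow_apply_of_lt (x : lp (fun _ : ℕ => H) 2) {m k : ℕ} (h : m < k) :
    ((shift H ^ k) x) m = 0 := by
  induction k generalizing m with
  | zero => omega
  | succ k ih =>
    rw [pow_succ', mul_apply_eq_comp]
    cases m with
    | zero => rfl
    | succ m => exact ih (by omega)

theorem eq_zero_of_forall_mem_range_shift_pow (x : lp (fun _ : ℕ => H) 2)
    (h : ∀ n : ℕ, x ∈ Set.range (shift H ^ n)) : x = 0 := by
  ext m
  obtain ⟨y, rfl⟩ := h (m + 1)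
  exact shift_pow_apply_of_lt y (Nat.lt_succ_self m)

theorem _root_.Orthonormal.linearIsometry_shift [CompleteSpace H]
    {T : H →L[ℂ] H} {w : H} (hv : Orthonormal ℂ fun n : ℕ => (T ^ n) w)
    (f : lp (fun _ : ℕ => ℂ) 2) :
    hv.orthogonalFamily.linearIsometry (shift ℂ f) = T (hv.orthogonalFamily.linearIsometry f) := by
  have hsum : ∀ f : lp (fun _ : ℕ => ℂ) 2,
      HasSum (fun n => f n • (T ^ n) w) (hv.orthogonalFamily.linearIsometry f) := fun f => by
    simpa using hv.orthogonalFamily.hasSum_linearIsometry f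
  refine (hsum (shift ℂ f)).unique ?_
  rw [← hasSum_nat_add_iff' 1]
  simpa [pow_succ', mul_apply_eq_comp] using T.hasSum (hsum f)

/-- inner-outer factorization of a nonzero vector `g ∈ ℓ²(ℕ,H)`:
there is an inner operator `W : ℓ²(ℕ) → ℓ²(ℕ,H)` with range `M_g` such that `y = W* g`
is outer and `g = W y`. -/
theorem inner_outer_factorization_of_vector
    {H : Type*} [NormedAddCommGroup H] [InnerProductSpace ℂ H] [CompleteSpace H]
    (g : lp (fun _ : ℕ => H) 2) (hg : g ≠ 0) :
    ∃ W : lp (fun _ : ℕ => ℂ) 2 →L[ℂ] lp (fun _ : ℕ => H) 2,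
      Isometry W ∧
      W.comp (shift ℂ) = (shift H).comp W ∧
      LinearMap.range W.toLinearMap =
        (Submodule.span ℂ (Set.range fun n : ℕ => (shift H ^ n) g)).topologicalClosure ∧
      (Submodule.span ℂ
        (Set.range fun n : ℕ =>
          (shift ℂ ^ n) (ContinuousLinearMap.adjoint W g))).topologicalClosure = ⊤ ∧
      g = W (ContinuousLinearMap.adjoint W g) := by
  have hv := orthonormal_pow_apply_wanderingVector (T := shift H) isometry_shift
    eq_zero_of_forall_mem_range_shift_pow hg
  let W := hv.orthogonalFamily.linearIsometry.toContinuousLinearMap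
  have hWS : W.comp (shift ℂ) = (shift H).comp W := ContinuousLinearMap.ext hv.linearIsometry_shift
  have hrange : LinearMap.range W.toLinearMap = cyclicSubspace (shift H) g := by
    rw [← cyclicSubspace_wanderingVector (T := shift H) isometry_shift
      eq_zero_of_forall_mem_range_shift_pow g]
    exact hv.range_linearIsometry
  have hW : Isometry W := hv.orthogonalFamily.linearIsometry.isometry
  exact ⟨W, hW, hWS, hrange, hW.cyclicSubspace_adjoint_apply_eq_top hWS hrange,
    (hW.apply_adjoint_apply_of_mem_range (hrange ▸ mem_cyclicSubspace_self)).symm⟩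

end Shift
end
end
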